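/- arXiv:math/9406228 — 5 statements merged into one kernel-verified Lean document; each statement's English description precedes it below -/
import Mathlib

section
/- Let T be a nowhere dense tree on 2^{<ω} and let f_T(n) = min{m : for every η of length n there is τ of length m extending η with τ ∉ T}. Let g : ω → ω and let (n_i), (n'_i) be increasing sequences of naturals with f_T^{g(i)}(n_i) ≤ n'_i < n_{i+1} for all i (where f^m denotes m-fold iteration). Then for every tree S with |S ∩ 2^{n'_i}| ≤ g(i) for every i, the set T + S = {η + σ : η ∈ T, σ ∈ S of the same length} is nowhere dense in 2^{<ω}. -/
open MeasureTheory Pointwise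

/-- Cantor space `2^ω` with componentwise addition mod 2. -/
abbrev Cantor : Type := ℕ → ZMod 2
/-- Finite binary sequences, the nodes of `2^{<ω}`. -/
abbrev FinSeq : Type := List (ZMod 2)

instance : TopologicalSpace (ZMod 2) := ⊥
instance : DiscreteTopology (ZMod 2) := ⟨rfl⟩
noncomputable instance : MeasurableSpace Cantor := borel Cantor
instance : BorelSpace Cantor := ⟨rfl⟩

/-- The uniform (Lebesgue) product measure on `2^ω`, realized as the Haar measure of the
compact group `2^ω` normalized so that the whole space has measure 1. -/
noncomputable def μC : Measure Cantor := Measure.addHaarMeasure ⊤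

/-- `X` is null-additive: `X + A` is null for every null `A`. -/
def NullAdditive (X : Set Cantor) : Prop := ∀ A : Set Cantor, μC A = 0 → μC (X + A) = 0

/-- `X` is meager-additive: `X + A` is meager for every meager `A`. -/
def MeagerAdditive (X : Set Cantor) : Prop := ∀ A : Set Cantor, IsMeagre A → IsMeagre (X + A)

/-- A tree on `2^{<ω}`: nonempty, closed under initial segments, and every node has
extensions in the tree of every greater length. -/
def IsTree (T : Set FinSeq) : Prop :=
  T.Nonempty ∧ (∀ σ τ : FinSeq, σ <+: τ → τ ∈ T → σ ∈ T) ∧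
    ∀ σ ∈ T, ∀ n, σ.length < n → ∃ τ ∈ T, σ <+: τ ∧ τ.length = n

/-- Restriction `x↾n` of `x ∈ 2^ω`. -/
def res (x : Cantor) (n : ℕ) : FinSeq := (List.range n).map x

/-- `Lim T = {x ∈ 2^ω : ∀ n, x↾n ∈ T}`. -/
def LimT (T : Set FinSeq) : Set Cantor := {x | ∀ n, res x n ∈ T}

/-- A nowhere dense tree: every node has an extension outside the tree. -/
def NwdTree (T : Set FinSeq) : Prop := ∀ η ∈ T, ∃ τ : FinSeq, η <+: τ ∧ τ ∉ T

/-- Componentwise mod-2 addition of finite sequences (of the same length). -/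
def finAdd : FinSeq → FinSeq → FinSeq := List.zipWith (· + ·)

/-- `T + S = {η + σ : η ∈ T, σ ∈ S, same length}`. -/
def treeSum (T S : Set FinSeq) : Set FinSeq :=
  {ρ | ∃ η ∈ T, ∃ σ ∈ S, η.length = σ.length ∧ ρ = finAdd η σ}

/-- `T^{[η]} = {τ ∈ T : τ ⊑ η or η ⊑ τ}`. -/
def through (T : Set FinSeq) (η : FinSeq) : Set FinSeq := {τ ∈ T | τ <+: η ∨ η <+: τ}

/-- `A^{fin}`: points agreeing with some point of `A` at all but finitely many coordinates. -/
def finEq (A : Set Cantor) : Set Cantor := {y | ∃ x ∈ A, ∀ᶠ n in Filter.atTop, y n = x n}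

/-- `U^{⟨ν⟩} = {τ : ν⌢τ ∈ U}`. -/
def above (U : Set FinSeq) (ν : FinSeq) : Set FinSeq := {τ | ν ++ τ ∈ U}

/-- A corset: a nondecreasing function `ω → ω \ {0}` tending to infinity. -/
def Corset (f : ℕ → ℕ) : Prop :=
  Monotone f ∧ (∀ n, 0 < f n) ∧ Filter.Tendsto f Filter.atTop Filter.atTop

/-- `S` is of width `f`: `|S ∩ 2^n| ≤ f n` for all `n`. -/
def widthLe (S : Set FinSeq) (f : ℕ → ℕ) : Prop := ∀ n, {τ ∈ S | τ.length = n}.ncard ≤ f n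

/-- `S` is almost of width `f`: `|S ∩ 2^n| ≤ f n` for all sufficiently large `n`. -/
def almostWidthLe (S : Set FinSeq) (f : ℕ → ℕ) : Prop :=
  ∀ᶠ n in Filter.atTop, {τ ∈ S | τ.length = n}.ncard ≤ f n

/-!
Fix a node `ρ` and the finitely many `σ ∈ S` of length `n' i`, where `i = |ρ|`; there are at
most `g i` of them. Starting from an extension of `ρ` of length `n i`, handle these `σ` one
at a time: to kill `σ`, leave `T` above the current node `τ + σ`, then translate back by `σ`.
This costs one application of `f_T`, so after at most `g i` steps we reach a node of length
`≤ n' i` no extension of which lies in `T + S` at level `n' i`.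
-/

open Function

/-- The property of `f_T` used in the argument; `f_T` is the least such function. -/
def EscapesBy (T : Set FinSeq) (f : ℕ → ℕ) : Prop :=
  ∀ η : FinSeq, ∃ τ, η <+: τ ∧ τ.length = f η.length ∧ τ ∉ T

lemma exists_prefix_length_eq {ρ : FinSeq} {L : ℕ} (h : ρ.length ≤ L) :
    ∃ τ : FinSeq, ρ <+: τ ∧ τ.length = L :=
  ⟨ρ ++ List.replicate (L - ρ.length) 0, List.prefix_append _ _, by simp; omega⟩

lemma length_finAdd_of_le {τ σ : FinSeq} (h : τ.length ≤ σ.length) :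
    (finAdd τ σ).length = τ.length := by
  simp [finAdd, h]

lemma finAdd_finAdd_cancel : ∀ {τ σ : FinSeq}, τ.length ≤ σ.length →
    finAdd (finAdd τ σ) σ = τ
  | [], _, _ => rfl
  | x :: τ, y :: σ, h => by
    have : x + y + y = x := by rw [add_assoc, CharTwo.add_self_eq_zero, add_zero]
    simp only [finAdd, List.zipWith_cons_cons, List.cons.injEq, this, true_and]
    exact finAdd_finAdd_cancel (by simpa using h)

lemma finAdd_prefix_finAdd : ∀ {τ ρ : FinSeq} (σ : FinSeq), τ <+: ρ → finAdd τ σ <+: finAdd ρ σ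
  | [], _, _, _ => List.nil_prefix
  | _ :: _, _, [], _ => by simp [finAdd]
  | x :: τ, _ :: _, y :: σ, h => by
    obtain ⟨rfl, h'⟩ := List.cons_prefix_cons.1 h
    exact List.cons_prefix_cons.2 ⟨rfl, finAdd_prefix_finAdd σ h'⟩

lemma notMem_treeSum {T S : Set FinSeq} {ρ : FinSeq}
    (h : ∀ σ ∈ S, σ.length = ρ.length → finAdd ρ σ ∉ T) : ρ ∉ treeSum T S := by
  rintro ⟨η, hη, σ, hσ, hlen, rfl⟩
  have hσ_len : σ.length = (finAdd η σ).length := by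
    rw [length_finAdd_of_le hlen.le, hlen]
  exact h σ hσ hσ_len (by rwa [finAdd_finAdd_cancel hlen.le])

lemma escapesBy_sInf {T : Set FinSeq} (hcl : ∀ σ τ : FinSeq, σ <+: τ → τ ∈ T → σ ∈ T)
    (hnwd : NwdTree T) :
    EscapesBy T fun m => sInf {k | ∀ η : FinSeq, η.length = m →
      ∃ τ : FinSeq, η <+: τ ∧ τ.length = k ∧ τ ∉ T} := by
  have hesc : ∀ η : FinSeq, ∃ τ, η <+: τ ∧ τ ∉ T := fun η =>
    (em (η ∈ T)).elim (hnwd η) fun hη => ⟨η, List.prefix_refl η, hη⟩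
  choose w hw_pre hw_out using hesc
  intro η
  suffices hne : {k | ∀ η' : FinSeq, η'.length = η.length →
      ∃ τ : FinSeq, η' <+: τ ∧ τ.length = k ∧ τ ∉ T}.Nonempty from Nat.sInf_mem hne η rfl
  -- Any bound on the finitely many `|w η'|` with `|η'| = |η|` works.
  obtain ⟨K, hK⟩ := ((List.finite_length_eq (ZMod 2) η.length).image fun η => (w η).length).bddAbove
  refine ⟨K, fun η' hη' => ?_⟩
  obtain ⟨τ, hτ_pre, hτ_len⟩ := exists_prefix_length_eq (hK ⟨η', hη', rfl⟩)
  exact ⟨τ, (hw_pre η').trans hτ_pre, hτ_len, fun hτ => hw_out η' (hcl _ _ hτ_pre hτ)⟩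

namespace EscapesBy

variable {T : Set FinSeq} {f : ℕ → ℕ}

lemma id_le (hf : EscapesBy T f) : id ≤ f := fun m => by
  obtain ⟨τ, hpre, hlen, -⟩ := hf (List.replicate m 0)
  simpa [hlen] using hpre.length_le

lemma exists_prefix_finAdd_notMem (hf : EscapesBy T f) (τ : FinSeq) {σ : FinSeq}
    (hσ : f τ.length ≤ σ.length) :
    ∃ τ', τ <+: τ' ∧ τ'.length = f τ.length ∧ finAdd τ' σ ∉ T := by
  have hτσ : τ.length ≤ σ.length := (hf.id_le _).trans hσ
  obtain ⟨η, hpre, hlen, hη⟩ := hf (finAdd τ σ)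
  rw [length_finAdd_of_le hτσ] at hlen
  have hησ : η.length ≤ σ.length := hlen ▸ hσ
  refine ⟨finAdd η σ, ?_, by rw [length_finAdd_of_le hησ, hlen], ?_⟩
  · simpa only [finAdd_finAdd_cancel hτσ] using finAdd_prefix_finAdd σ hpre
  · rwa [finAdd_finAdd_cancel hησ]

lemma exists_prefix_forall_finAdd_notMem (hf : EscapesBy T f)
    (hcl : ∀ σ τ : FinSeq, σ <+: τ → τ ∈ T → σ ∈ T) (F : Finset FinSeq) (τ : FinSeq)
    (hF : ∀ σ ∈ F, f^[F.card] τ.length ≤ σ.length) :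
    ∃ τ', τ <+: τ' ∧ τ'.length = f^[F.card] τ.length ∧ ∀ σ ∈ F, finAdd τ' σ ∉ T := by
  induction F using Finset.induction_on with
  | empty => exact ⟨τ, List.prefix_refl τ, rfl, by simp⟩
  | @insert a s ha ih =>
    simp only [Finset.card_insert_of_notMem ha, iterate_succ_apply'] at hF ⊢
    have hmono : f^[s.card] τ.length ≤ f (f^[s.card] τ.length) := hf.id_le _
    obtain ⟨τ₁, hpre₁, hlen₁, hτ₁⟩ :=
      ih fun σ hσ => hmono.trans (hF σ (Finset.mem_insert_of_mem hσ))
    obtain ⟨τ₂, hpre₂, hlen₂, hτ₂⟩ :=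
      hf.exists_prefix_finAdd_notMem τ₁ (hlen₁ ▸ hF a (Finset.mem_insert_self a s))
    refine ⟨τ₂, hpre₁.trans hpre₂, hlen₁ ▸ hlen₂, fun σ hσ => ?_⟩
    rcases Finset.mem_insert.1 hσ with rfl | hσ
    · exact hτ₂
    · exact fun h => hτ₁ σ hσ (hcl _ _ (finAdd_prefix_finAdd σ hpre₂) h)

end EscapesBy

theorem stmt1_general (T : Set FinSeq) (hT : IsTree T) (hnwd : NwdTree T)
    (f : ℕ → ℕ)
    (hf : ∀ m, f m = sInf {k | ∀ η : FinSeq, η.length = m →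
      ∃ τ : FinSeq, η <+: τ ∧ τ.length = k ∧ τ ∉ T})
    (g : ℕ → ℕ) (n n' : ℕ → ℕ) (hn : StrictMono n)
    (hc : ∀ i, f^[g i] (n i) ≤ n' i ∧ n' i < n (i + 1))
    (S : Set FinSeq)
    (hw : ∀ i, {τ ∈ S | τ.length = n' i}.ncard ≤ g i) :
    NwdTree (treeSum T S) := by
  intro ρ _
  have hesc : EscapesBy T f := funext hf ▸ escapesBy_sInf hT.2.1 hnwd
  set i := ρ.length
  obtain ⟨ρ₀, hρ₀_pre, hρ₀_len⟩ := exists_prefix_length_eq (hn.le_apply (x := i))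
  have hfin : {τ ∈ S | τ.length = n' i}.Finite :=
    (List.finite_length_eq (ZMod 2) (n' i)).subset fun _ hτ => hτ.2
  have hcard : hfin.toFinset.card ≤ g i := by
    rw [← Set.ncard_eq_toFinset_card _ hfin]; exact hw i
  have hle : f^[hfin.toFinset.card] ρ₀.length ≤ n' i := by
    rw [hρ₀_len]; exact (monotone_iterate_of_id_le hesc.id_le hcard _).trans (hc i).1
  obtain ⟨τ, hτ_pre, hτ_len, hτ⟩ := hesc.exists_prefix_forall_finAdd_notMem hT.2.1
    hfin.toFinset ρ₀ fun σ hσ => ((Set.Finite.mem_toFinset hfin).1 hσ).2.symm ▸ hle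
  obtain ⟨τ', hτ'_pre, hτ'_len⟩ := exists_prefix_length_eq (hτ_len ▸ hle)
  refine ⟨τ', hρ₀_pre.trans (hτ_pre.trans hτ'_pre), notMem_treeSum fun σ hσ hσ_len h => ?_⟩
  exact hτ σ ((Set.Finite.mem_toFinset hfin).2 ⟨hσ, hσ_len.trans hτ'_len⟩)
    (hT.2.1 _ _ (finAdd_prefix_finAdd σ hτ'_pre) h)

/-- Lemma 6: if `T` is a nowhere dense tree with modulus `f = f_T`, and
`f^[g i] (n i) ≤ n' i < n (i+1)`, then for every tree `S` of width `(n', g)`, the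
sum `T + S` is nowhere dense. -/
theorem stmt1 (T : Set FinSeq) (hT : IsTree T) (hnwd : NwdTree T)
    (f : ℕ → ℕ)
    (hf : ∀ m, f m = sInf {k | ∀ η : FinSeq, η.length = m →
      ∃ τ : FinSeq, η <+: τ ∧ τ.length = k ∧ τ ∉ T})
    (g : ℕ → ℕ) (n n' : ℕ → ℕ) (hn : StrictMono n) (hn' : StrictMono n')
    (hc : ∀ i, f^[g i] (n i) ≤ n' i ∧ n' i < n (i + 1))
    (S : Set FinSeq) (hS : IsTree S)
    (hw : ∀ i, {τ ∈ S | τ.length = n' i}.ncard ≤ g i) :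
    NwdTree (treeSum T S) :=
  stmt1_general T hT hnwd f hf g n n' hn hc S hw
end

section
/- If S and T_i (i ∈ ω) are trees on 2^{<ω} and Lim S ⊆ ⋃_{i∈ω} Lim T_i, then there exist η ∈ S and j ∈ ω such that S^{[η]} ⊆ T_j, where S^{[η]} = {τ ∈ S : τ ⊑ η or η ⊑ τ}. -/
open MeasureTheory Pointwise

/-! ### Auxiliary lemmas for `stmt2` -/

lemma res_eq_res_iff {x y : Cantor} {n : ℕ} : res x n = res y n ↔ ∀ i < n, x i = y i := by
  simp [res, List.map_inj_left]

lemma res_length' (x : Cantor) (n : ℕ) : (res x n).length = n := by simp [res]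

lemma res_take (x : Cantor) {a b : ℕ} (h : a ≤ b) : res x a = (res x b).take a := by
  simp [res, ← List.map_take, List.take_range, Nat.min_eq_left h]

lemma res_prefix (x : Cantor) {a b : ℕ} (h : a ≤ b) : res x a <+: res x b := by
  rw [res_take x h]; exact List.take_prefix _ _

lemma res_getD (τ : FinSeq) : res (fun i => τ.getD i 0) τ.length = τ := by
  apply List.ext_getElem
  · simp [res]
  · intro n h1 h2
    simp only [res, List.getElem_map, List.getElem_range]
    exact List.getD_eq_getElem _ _ h2

lemma isClosed_resMem (P : Set FinSeq) (m : ℕ) : IsClosed {x : Cantor | res x m ∈ P} := by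
  rw [← isOpen_compl_iff, isOpen_iff_mem_nhds]
  intro x hx
  refine Filter.mem_of_superset
    (((PiNat.isOpen_cylinder (fun _ : ℕ => ZMod 2) x m).mem_nhds (PiNat.self_mem_cylinder x m)) :
      PiNat.cylinder x m ∈ nhds x) ?_
  intro y hy
  have hyx : res y m = res x m := res_eq_res_iff.2 (fun i hi => PiNat.mem_cylinder_iff.1 hy i hi)
  simpa [Set.mem_compl_iff, hyx] using hx

lemma isClosed_LimT (T : Set FinSeq) : IsClosed (LimT T) := by
  have : LimT T = ⋂ n, {x : Cantor | res x n ∈ T} := by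
    ext x; simp [LimT, Set.mem_iInter]
  rw [this]
  exact isClosed_iInter fun n => isClosed_resMem _ _

lemma exists_branch {S : Set FinSeq} (hS : IsTree S) {η : FinSeq} (hη : η ∈ S) :
    ∃ x, x ∈ LimT S ∧ res x η.length = η := by
  set l := η.length with hl
  set K : ℕ → Set Cantor := fun n => {x | res x (l + n) ∈ S ∧ res x l = η} with hK
  have hmono : ∀ n, K (n + 1) ⊆ K n := by
    intro n x hx
    exact ⟨hS.2.1 _ _ (res_prefix x (by omega)) hx.1, hx.2⟩
  have hne : ∀ n, (K n).Nonempty := by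
    intro n
    rcases Nat.eq_zero_or_pos n with rfl | hn
    · have h1 : res (fun i => η.getD i 0) l = η := by rw [hl]; exact res_getD η
      refine ⟨fun i => η.getD i 0, ?_, h1⟩
      show res (fun i => η.getD i 0) (l + 0) ∈ S
      rw [Nat.add_zero, h1]; exact hη
    · obtain ⟨τ, hτS, hpre, hlen⟩ := hS.2.2 η hη (l + n) (by omega)
      refine ⟨fun i => τ.getD i 0, ?_, ?_⟩
      · show res _ (l + n) ∈ S
        rw [← hlen, res_getD τ]; exact hτS
      · show res _ l = η
        have h1 : res (fun i => τ.getD i 0) τ.length = τ := res_getD τ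
        have h2 : l ≤ τ.length := by omega
        rw [res_take _ h2, h1, ← List.prefix_iff_eq_take.1 hpre]
  have hcl : ∀ n, IsClosed (K n) := by
    intro n
    have : K n = {x : Cantor | res x (l + n) ∈ S} ∩ {x : Cantor | res x l ∈ ({η} : Set FinSeq)} := by
      ext x; simp [hK]
    rw [this]
    exact (isClosed_resMem _ _).inter (isClosed_resMem _ _)
  obtain ⟨x, hx⟩ := IsCompact.nonempty_iInter_of_sequence_nonempty_isCompact_isClosed K
    hmono hne ((hcl 0).isCompact) hcl
  simp only [Set.mem_iInter] at hx
  refine ⟨x, fun m => ?_, (hx 0).2⟩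
  exact hS.2.1 _ _ (res_prefix x (by omega : m ≤ l + m)) (hx m).1


/-- Lemma 7: if `Lim S ⊆ ⋃ i, Lim (T i)` then some `S^{[η]}` is contained
in some `T j`. -/
theorem stmt2 (S : Set FinSeq) (T : ℕ → Set FinSeq) (hS : IsTree S)
    (hT : ∀ i, IsTree (T i)) (h : LimT S ⊆ ⋃ i, LimT (T i)) :
    ∃ η ∈ S, ∃ j : ℕ, through S η ⊆ T j := by
  classical
  -- `LimT S` is a nonempty compact subspace of `Cantor`.
  obtain ⟨σ0, hσ0⟩ := hS.1
  obtain ⟨x0, hx0, -⟩ := exists_branch hS hσ0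
  haveI : Nonempty (LimT S) := ⟨⟨x0, hx0⟩⟩
  haveI : CompactSpace (LimT S) := isCompact_iff_compactSpace.1 (isClosed_LimT S).isCompact
  set f : ℕ → Set (LimT S) := fun i => (Subtype.val) ⁻¹' (LimT (T i)) with hf
  have hc : ∀ i, IsClosed (f i) := fun i => (isClosed_LimT _).preimage continuous_subtype_val
  have hU : ⋃ i, f i = Set.univ := by
    ext z
    simp only [Set.mem_iUnion, Set.mem_univ, iff_true]
    obtain ⟨i, hi⟩ := Set.mem_iUnion.1 (h z.2)
    exact ⟨i, hi⟩
  haveI : LocallyCompactSpace (LimT S) := inferInstance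
  obtain ⟨j, ⟨⟨x, hxS⟩, hint⟩⟩ := nonempty_interior_of_iUnion_of_closed hc hU
  have hfj : f j ∈ nhds (⟨x, hxS⟩ : LimT S) := mem_interior_iff_mem_nhds.1 hint
  rw [nhds_induced] at hfj
  obtain ⟨V, hV, hVf⟩ := hfj
  obtain ⟨s, ⟨z, n, rfl⟩, hxs, hsV⟩ :=
    (PiNat.isTopologicalBasis_cylinders (fun _ : ℕ => ZMod 2)).mem_nhds_iff.1 hV
  have hcyl : PiNat.cylinder x n ⊆ V := by
    rw [PiNat.mem_cylinder_iff_eq.1 hxs]; exact hsV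
  -- key: every branch of `S` agreeing with `x` below `n` is a branch of `T j`
  have key : ∀ y, y ∈ LimT S → res y n = res x n → y ∈ LimT (T j) := by
    intro y hyS hyx
    have hy : y ∈ PiNat.cylinder x n :=
      PiNat.mem_cylinder_iff.2 (fun i hi => res_eq_res_iff.1 hyx i hi)
    exact hVf (hcyl hy : (⟨y, hyS⟩ : LimT S).val ∈ V)
  refine ⟨res x n, hxS n, j, ?_⟩
  rintro τ ⟨hτS, hτ | hτ⟩
  · -- τ is a prefix of η = res x n
    have hxj : x ∈ LimT (T j) := key x hxS rfl
    have hlen : τ.length ≤ n := by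
      have := hτ.length_le; rwa [res_length'] at this
    have : τ = res x τ.length := by
      rw [res_take x hlen, ← List.prefix_iff_eq_take.1 hτ]
    rw [this]; exact hxj τ.length
  · -- η = res x n is a prefix of τ
    obtain ⟨y, hyS, hyτ⟩ := exists_branch hS hτS
    have hlen : n ≤ τ.length := by
      have := hτ.length_le; rwa [res_length'] at this
    have hyx : res y n = res x n := by
      rw [res_take y hlen, hyτ]
      have h2 := List.prefix_iff_eq_take.1 hτ
      rw [res_length'] at h2
      exact h2.symm
    have hyj : y ∈ LimT (T j) := key y hyS hyx
    rw [← hyτ]; exact hyj τ.length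
end

section
/- Let S and T be trees on 2^{<ω} with Lim S ⊆ (Lim T)^{fin}. Then there exist k < ω and η, ν ∈ 2^k with η ∈ S such that S^{⟨η⟩} ⊆ T^{⟨ν⟩}, where U^{⟨ν⟩} = {τ : ν⌢τ ∈ U}. -/
open MeasureTheory Pointwise

/-- Lemma 8: if `Lim S ⊆ (Lim T)^{fin}` then there are `k` and
`η, ν ∈ 2^k` with `η ∈ S` and `S^{⟨η⟩} ⊆ T^{⟨ν⟩}`. -/
theorem stmt3 (S T : Set FinSeq) (hS : IsTree S) (hT : IsTree T)
    (h : LimT S ⊆ finEq (LimT T)) :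
    ∃ (k : ℕ) (η ν : FinSeq), η.length = k ∧ ν.length = k ∧ η ∈ S ∧
      above S η ⊆ above T ν := by
  by_contra hcon
  push_neg at hcon
  -- hcon : ∀ k η ν, η.length = k → ν.length = k → η ∈ S → ¬ above S η ⊆ above T ν
  obtain ⟨σ0, hσ0⟩ := hS.1
  have hnil : ([] : FinSeq) ∈ S := hS.2.1 [] σ0 List.nil_prefix hσ0
  -- one-step extension defeating a given ν
  have step : ∀ η ν : FinSeq, ∃ τ : FinSeq, η ∈ S →
      (1 ≤ τ.length ∧ η ++ τ ∈ S ∧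
        (ν.length ≤ η.length → (ν ++ (η.drop ν.length)) ++ τ ∉ T)) := by
    intro η ν
    by_cases hη : η ∈ S
    · obtain ⟨η', hη'S, hpre, hlen'⟩ := hS.2.2 η hη (η.length + 1) (Nat.lt_succ_self _)
      have heq : η ++ η'.drop η.length = η' := List.prefix_iff_eq_append.mp hpre
      by_cases hν : ν.length ≤ η.length
      · have hlν' : ((ν ++ η.drop ν.length) ++ η'.drop η.length).length = η'.length := by
          simp [List.length_drop, hlen']; omega
        have hns := hcon η'.length η' ((ν ++ η.drop ν.length) ++ η'.drop η.length) rfl hlν' hη'S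
        rw [Set.not_subset] at hns
        obtain ⟨τ0, hτ0S, hτ0T⟩ := hns
        refine ⟨η'.drop η.length ++ τ0, fun _ => ⟨?_, ?_, fun _ => ?_⟩⟩
        · have : (η'.drop η.length).length = 1 := by simp [List.length_drop, hlen']
          simp [List.length_append, this]
        · rw [← List.append_assoc, heq]; exact hτ0S
        · simpa only [above, Set.mem_setOf_eq, List.append_assoc] using hτ0T
      · refine ⟨η'.drop η.length, fun _ => ⟨?_, ?_, fun hc => absurd hc hν⟩⟩
        · simp [List.length_drop, hlen']
        · rw [heq]; exact hη'S
    · exact ⟨[], fun hc => absurd hc hη⟩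
  choose F hF using step
  obtain ⟨p, hp⟩ := exists_surjective_nat (ℕ × FinSeq)
  set g : ℕ → FinSeq := fun n => Nat.rec [] (fun i ηi => ηi ++ F ηi (p i).2) n with hg
  have hgsucc : ∀ i, g (i + 1) = g i ++ F (g i) (p i).2 := fun i => rfl
  have hmem : ∀ i, g i ∈ S := by
    intro i
    induction i with
    | zero => exact hnil
    | succ i ih => rw [hgsucc]; exact (hF (g i) (p i).2 ih).2.1
  have hlenstep : ∀ i, (g i).length < (g (i + 1)).length := by
    intro i
    rw [hgsucc, List.length_append]
    have := (hF (g i) (p i).2 (hmem i)).1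
    omega
  have hlen : ∀ i, i ≤ (g i).length := by
    intro i
    induction i with
    | zero => exact Nat.zero_le _
    | succ i ih => have := hlenstep i; omega
  have hpre : ∀ i j, i ≤ j → g i <+: g j := by
    intro i j hij
    induction j with
    | zero => rw [Nat.le_zero.mp hij]
    | succ j ih =>
      rcases Nat.lt_or_ge i (j + 1) with hlt | hge
      · exact (ih (Nat.lt_succ_iff.mp hlt)).trans ⟨F (g j) (p j).2, (hgsucc j).symm⟩
      · rw [Nat.le_antisymm hij hge]
  have defeat : ∀ i, (p i).2.length ≤ (g i).length →
      (p i).2 ++ (g (i + 1)).drop (p i).2.length ∉ T := by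
    intro i hle
    have := (hF (g i) (p i).2 (hmem i)).2.2 hle
    rw [hgsucc, List.drop_append_of_le_length hle, ← List.append_assoc]
    exact this
  set x : Cantor := fun n => (g (n + 1)).getD n 0 with hx
  have agree : ∀ i n, n < (g i).length → (g i).getD n (0 : ZMod 2) = x n := by
    intro i n hn
    have hn' : n < (g (n + 1)).length := lt_of_lt_of_le (Nat.lt_succ_self n) (hlen (n + 1))
    rw [hx]
    simp only
    rw [List.getD_eq_getElem _ _ hn, List.getD_eq_getElem _ _ hn']
    rcases Nat.le_total i (n + 1) with hij | hij
    · exact (hpre i (n + 1) hij).getElem hn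
    · exact ((hpre (n + 1) i hij).getElem hn').symm
  have resx : ∀ (n i : ℕ), n ≤ (g i).length → res x n = (g i).take n := by
    intro n i hn
    apply List.ext_getElem
    · simp [res, hn]
    · intro j h1 h2
      simp only [res, List.getElem_map, List.getElem_range, List.getElem_take]
      have hj : j < (g i).length := by simp [res] at h1; omega
      rw [← agree i j hj]
      exact List.getD_eq_getElem _ _ hj
  have hxS : x ∈ LimT S := by
    intro n
    rw [resx n n (hlen n)]
    exact hS.2.1 _ _ (List.take_prefix n (g n)) (hmem n)
  obtain ⟨z, hz, hev⟩ := h hxS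
  rw [Filter.eventually_atTop] at hev
  obtain ⟨m0, hm0⟩ := hev
  set ν : FinSeq := res z m0 with hν
  have hνlen : ν.length = m0 := by simp [hν, res]
  -- find a stage i ≥ m0 with (p i).2 = ν
  have hqex : ∀ j : ℕ, ∃ i, p i = (j, ν) := fun j => hp (j, ν)
  choose q hq using hqex
  have hqinj : Function.Injective q := by
    intro a b hab
    have : (a, ν) = (b, ν) := by rw [← hq a, ← hq b, hab]
    exact (Prod.mk.injEq _ _ _ _).mp this |>.1
  have hbig : ∃ j, m0 ≤ q j := by
    by_contra hc
    push_neg at hc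
    obtain ⟨a, b, hab, he⟩ := Finite.exists_ne_map_eq_of_infinite
      (fun j : ℕ => (⟨q j, hc j⟩ : Fin m0))
    exact hab (hqinj (by simpa using he))
  obtain ⟨j, hj⟩ := hbig
  set i := q j with hi
  have hpi : (p i).2 = ν := by rw [hi, hq j]
  have hm0i : m0 ≤ (g i).length := le_trans hj (hlen i)
  have hnot : ν ++ (g (i + 1)).drop m0 ∉ T := by
    have := defeat i (by rw [hpi, hνlen]; exact hm0i)
    rwa [hpi, hνlen] at this
  apply hnot
  have hm0L : m0 ≤ (g (i + 1)).length := le_trans hm0i (le_of_lt (hlenstep i))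
  have hkey : ν ++ (g (i + 1)).drop m0 = res z (g (i + 1)).length := by
    apply List.ext_getElem
    · simp [res, hνlen, List.length_drop]; omega
    · intro n h1 h2
      have hnL : n < (g (i + 1)).length := by simp [res] at h2; exact h2
      simp only [res, List.getElem_map, List.getElem_range]
      rcases Nat.lt_or_ge n m0 with hlt | hge
      · rw [List.getElem_append_left (by omega : n < ν.length)]
        simp [hν, res]
      · rw [List.getElem_append_right (by omega : ν.length ≤ n)]
        rw [List.getElem_drop]
        have heq1 : m0 + (n - ν.length) = n := by rw [hνlen]; omega
        have hlt1 : m0 + (n - ν.length) < (g (i+1)).length := by omega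
        have := agree (i + 1) n hnL
        rw [List.getD_eq_getElem _ _ hnL] at this
        have hzx := hm0 n hge
        simp_rw [heq1]
        rw [this, hzx]
  rw [hkey]
  exact hz _
end

section
/- A set X ⊆ 2^ω is meager-additive if and only if for every increasing sequence n_0 < n_1 < n_2 < … of natural numbers there are an increasing sequence i_0 < i_1 < … of naturals and y ∈ 2^ω such that for every x ∈ X and every sufficiently large k < ω, there is l ∈ [i_k, i_{k+1}) with x↾[n_l, n_{l+1}) = y↾[n_l, n_{l+1}). -/
open MeasureTheory Pointwise

/-- Condition (b) of Theorem 18. -/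
def MatchProp (X : Set Cantor) : Prop :=
  ∀ n : ℕ → ℕ, StrictMono n →
    ∃ i : ℕ → ℕ, StrictMono i ∧ ∃ y : Cantor,
      ∀ x ∈ X, ∀ᶠ k in Filter.atTop, ∃ l, i k ≤ l ∧ l < i (k + 1) ∧
        ∀ m, n l ≤ m → m < n (l + 1) → x m = y m

/-!
A set `A ⊆ 2^ω` is meagre iff for every interval partition `[n k, n (k + 1))` of `ℕ` there are a
coarsening `n ∘ i` and a `y` such that every point of `A` eventually disagrees with `y` on each
coarse block. The set of all such points is a countable union of closed nowhere dense sets;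
conversely, given dense open sets `U 0 ⊇ U 1 ⊇ ⋯` missing `A`, the `k`-th coarse block of `y` is
chosen so that agreeing with `y` on it forces membership in `U k`.

If `x` agrees with `y` on a fine block inside each coarse block and `a` eventually disagrees with
`z` on every fine block, then `x + a` eventually disagrees with `y + z` on every coarse block; this
gives meagre-additivity. Conversely, apply the characterisation to `X + A`, where `A` is the
meagre set of points nonzero on every block of `n`: the `a ∈ A` equal to `y - x` on the blocks
where `x ≠ y` makes `x + a = y` there, so each coarse block must contain a block where `x = y`.
-/

open Filter Set Topology

section Blocks

variable {n : ℕ → ℕ}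

lemma StrictMono.exists_mem_block (hn : StrictMono n) {a b t : ℕ} (ha : n a ≤ t)
    (hb : t < n b) :
    ∃ l, a ≤ l ∧ l < b ∧ t ∈ Ico (n l) (n (l + 1)) := by
  induction b with
  | zero => exact absurd (hn.monotone (Nat.zero_le a)) (by omega)
  | succ b ih =>
    by_cases htb : t < n b
    · obtain ⟨l, hal, hlb, htl⟩ := ih htb
      exact ⟨l, hal, hlb.trans (lt_add_one b), htl⟩
    · refine ⟨b, ?_, lt_add_one b, not_lt.mp htb, hb⟩
      exact Nat.lt_succ_iff.mp (hn.lt_iff_lt.mp (ha.trans_lt hb))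

lemma StrictMono.exists_eqOn_blocks {β : Type*} (hn : StrictMono n) (e : ℕ → ℕ → β) :
    ∃ y : ℕ → β, ∀ l, EqOn y (e l) (Ico (n l) (n (l + 1))) := by
  classical
  have hex : ∀ m, ∃ l, m < n (l + 1) := fun m => ⟨m, (lt_add_one m).trans_le hn.le_apply⟩
  refine ⟨fun m => e (Nat.find (hex m)) m, fun l m hm => ?_⟩
  have hfind : Nat.find (hex m) = l := by
    refine (Nat.find_eq_iff _).mpr ⟨hm.2, fun l' hl' => not_lt.mpr ?_⟩
    exact (hn.monotone (Nat.succ_le_of_lt hl')).trans hm.1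
  simp only [hfind]

lemma StrictMono.exists_ne_zero_on_blocks_add_eqOn {β : Type*} [AddCommGroup β] [Nontrivial β]
    (hn : StrictMono n) (x y : ℕ → β) :
    ∃ a : ℕ → β, (∀ l, ¬EqOn a 0 (Ico (n l) (n (l + 1)))) ∧
      ∀ l, ¬EqOn x y (Ico (n l) (n (l + 1))) → EqOn (x + a) y (Ico (n l) (n (l + 1))) := by
  classical
  obtain ⟨c, hc⟩ := exists_ne (0 : β)
  obtain ⟨a, ha⟩ := hn.exists_eqOn_blocks fun l =>
    if EqOn x y (Ico (n l) (n (l + 1))) then fun _ => c else y - x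
  refine ⟨a, fun l ha0 => ?_, fun l hxy m hm => ?_⟩
  · by_cases hxy : EqOn x y (Ico (n l) (n (l + 1)))
    · have hnl : n l ∈ Ico (n l) (n (l + 1)) := ⟨le_rfl, hn (lt_add_one l)⟩
      have := ha l hnl
      simp only [if_pos hxy] at this
      exact hc (this.symm.trans (ha0 hnl))
    · obtain ⟨m, hm, hne⟩ := not_forall₂.mp hxy
      have := ha l hm
      simp only [if_neg hxy, Pi.sub_apply, ha0 hm, Pi.zero_apply] at this
      exact hne (sub_eq_zero.mp this.symm).symm
  · rw [Pi.add_apply, ha l hm, if_neg hxy, Pi.sub_apply, add_sub_cancel]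

end Blocks

def eventuallyMisses {β : Type*} (n : ℕ → ℕ) (y : ℕ → β) : Set (ℕ → β) :=
  {w | ∀ᶠ k in atTop, ¬EqOn w y (Ico (n k) (n (k + 1)))}

lemma IsMeagre.exists_antitone_isOpen_dense {X : Type*} [TopologicalSpace X] [BaireSpace X]
    {A : Set X} (hA : IsMeagre A) :
    ∃ U : ℕ → Set X,
      (∀ k, IsOpen (U k) ∧ Dense (U k)) ∧ Antitone U ∧ ∀ x ∈ A, ∃ k, x ∉ U k := by
  obtain ⟨G, hGA, hGδ, hGd⟩ := mem_residual.mp hA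
  obtain ⟨f, hfo, rfl⟩ := isGδ_iff_eq_iInter_nat.mp hGδ
  refine ⟨fun k => ⋂ j ≤ k, f j,
    fun k => ⟨(finite_le_nat k).isOpen_biInter fun j _ => hfo j,
      hGd.mono (subset_iInter₂ fun j _ => iInter_subset f j)⟩,
    fun k k' hkk' => biInter_subset_biInter_left fun j hj => le_trans hj hkk', fun x hx => ?_⟩
  obtain ⟨k, hk⟩ : ∃ k, x ∉ f k := by simpa using fun h => hGA h hx
  exact ⟨k, fun h => hk (mem_iInter₂.mp h k le_rfl)⟩

section Cantor

variable {n : ℕ → ℕ}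

lemma isOpen_setOf_eqOn (y : Cantor) {I : Set ℕ} (hI : I.Finite) :
    IsOpen {w : Cantor | EqOn w y I} := by
  have : {w : Cantor | EqOn w y I} = I.pi fun m => {y m} := by
    ext w
    simp [EqOn, Set.mem_pi]
  rw [this]
  exact isOpen_set_pi hI fun m _ => isOpen_discrete {y m}

lemma dense_iUnion_setOf_eqOn_block (hn : StrictMono n) (N : ℕ) (y : Cantor) :
    Dense (⋃ k ≥ N, {w : Cantor | EqOn w y (Ico (n k) (n (k + 1)))}) := by
  classical
  refine (PiNat.isTopologicalBasis_cylinders _).dense_iff.mpr ?_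
  rintro _ ⟨x, r, rfl⟩ -
  let k := max N r
  refine ⟨(Ico (n k) (n (k + 1))).piecewise y x, fun m hm => piecewise_eq_of_notMem _ _ _ ?_,
    mem_biUnion (le_max_left N r) (piecewise_eqOn _ _ _)⟩
  exact fun hmk => (hm.trans_le ((le_max_right N r).trans hn.le_apply)).not_ge hmk.1

lemma isMeagre_eventuallyMisses (hn : StrictMono n) (y : Cantor) :
    IsMeagre (eventuallyMisses n y) := by
  let V : ℕ → Set Cantor := fun N => ⋃ k ≥ N, {w | EqOn w y (Ico (n k) (n (k + 1)))}
  have hV : ∀ N, IsOpen (V N) := fun N =>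
    isOpen_biUnion fun k _ => isOpen_setOf_eqOn y (finite_Ico _ _)
  have hunion : eventuallyMisses n y = ⋃ N, (V N)ᶜ := by
    ext w
    simp [V, eventuallyMisses, eventually_atTop]
  rw [hunion]
  refine isMeagre_iUnion fun N => IsNowhereDense.isMeagre ?_
  refine (isClosed_isNowhereDense_iff_compl.mpr ⟨?_, ?_⟩).2
  · simpa using hV N
  · simpa using dense_iUnion_setOf_eqOn_block hn N y

/-- Translating by the finitely many patterns supported on `[0, s)` makes one block `e` work
for every initial segment at once. -/
lemma exists_setOf_eqOn_Ico_subset {U : Set Cantor} (hUo : IsOpen U) (hUd : Dense U) (s : ℕ) :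
    ∃ t, ∃ e : Cantor, {w | EqOn w e (Ico s t)} ⊆ U := by
  classical
  let pad : (Fin s → ZMod 2) → Cantor := fun σ m => if h : m < s then σ ⟨m, h⟩ else 0
  have hopen : ∀ σ, IsOpen ((· + pad σ) ⁻¹' U) :=
    fun σ => hUo.preimage (continuous_add_const _)
  have hdense : Dense (⋂ σ, (· + pad σ) ⁻¹' U) :=
    dense_iInter_of_isOpen hopen fun σ => hUd.preimage (isOpenMap_add_right _)
  obtain ⟨v, hv⟩ := hdense.nonempty
  obtain ⟨_, ⟨x, t, rfl⟩, hvx, hsub⟩ :=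
    (PiNat.isTopologicalBasis_cylinders _).exists_subset_of_mem_open hv
      (isOpen_iInter_of_finite hopen)
  rw [← PiNat.mem_cylinder_iff_eq.mp hvx] at hsub
  refine ⟨t, v, fun w hw => ?_⟩
  let σ : Fin s → ZMod 2 := fun m => w m - v m
  have hwσ : w - pad σ ∈ PiNat.cylinder v t := fun m hm => by
    by_cases hms : m < s
    · simp [pad, σ, hms]
    · simpa [pad, hms] using hw ⟨not_lt.mp hms, hm⟩
  simpa using mem_iInter.mp (hsub hwσ) σ

lemma IsMeagre.exists_subset_eventuallyMisses {A : Set Cantor} (hA : IsMeagre A)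
    (hn : StrictMono n) :
    ∃ i : ℕ → ℕ, StrictMono i ∧ ∃ y : Cantor, A ⊆ eventuallyMisses (n ∘ i) y := by
  obtain ⟨U, hU, hUanti, hAU⟩ := hA.exists_antitone_isOpen_dense
  choose T E hTE using fun k => exists_setOf_eqOn_Ico_subset (hU k).1 (hU k).2
  obtain ⟨i, hi⟩ : ∃ i : ℕ → ℕ, ∀ k, i (k + 1) = max (i k + 1) (T k (n (i k))) :=
    ⟨fun k => Nat.rec 0 (fun k ik => max (ik + 1) (T k (n ik))) k, fun _ => rfl⟩
  have hi_mono : StrictMono i := strictMono_nat_of_lt_succ fun k => by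
    rw [hi k]; exact lt_max_of_lt_left (lt_add_one _)
  obtain ⟨y, hy⟩ := (hn.comp hi_mono).exists_eqOn_blocks fun k => E k (n (i k))
  refine ⟨i, hi_mono, y, fun w hw => ?_⟩
  obtain ⟨N, hN⟩ := hAU w hw
  filter_upwards [eventually_ge_atTop N] with k hk hwy
  have hT : T k (n (i k)) ≤ n (i (k + 1)) := by
    rw [hi k]; exact (le_max_right _ _).trans hn.le_apply
  exact hN (hUanti hk (hTE k _ fun m hm =>
    (hwy ⟨hm.1, hm.2.trans_le hT⟩).trans (hy k ⟨hm.1, hm.2.trans_le hT⟩)))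

end Cantor

theorem MatchProp.meagerAdditive {X : Set Cantor} (hX : MatchProp X) : MeagerAdditive X := by
  intro A hA
  obtain ⟨i, hi, z, hAz⟩ := hA.exists_subset_eventuallyMisses strictMono_id
  obtain ⟨j, hj, y, hXy⟩ := hX i hi
  refine (isMeagre_eventuallyMisses (hi.comp hj) (y + z)).mono ?_
  rintro _ ⟨x, hx, a, ha, rfl⟩
  obtain ⟨N, hN⟩ := eventually_atTop.mp (hAz ha)
  filter_upwards [hXy x hx, eventually_ge_atTop N] with k ⟨l, hjl, hlj, hxy⟩ hk hsum
  refine hN l (hk.trans (hj.le_apply.trans hjl)) fun m hm => ?_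
  have hm' : m ∈ Ico (i (j k)) (i (j (k + 1))) :=
    ⟨(hi.monotone hjl).trans hm.1, hm.2.trans_le (hi.monotone hlj)⟩
  have hsum' : x m + a m = y m + z m := hsum hm'
  rw [hxy m hm.1 hm.2] at hsum'
  exact add_left_cancel hsum'

theorem MeagerAdditive.matchProp {X : Set Cantor} (hX : MeagerAdditive X) : MatchProp X := by
  intro n hn
  obtain ⟨i, hi, y, hXA⟩ :=
    (hX _ (isMeagre_eventuallyMisses hn 0)).exists_subset_eventuallyMisses hn
  refine ⟨i, hi, y, fun x hx => ?_⟩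
  obtain ⟨a, ha0, hxa⟩ := hn.exists_ne_zero_on_blocks_add_eqOn x y
  filter_upwards [hXA (add_mem_add hx (Eventually.of_forall ha0))] with k hk
  by_contra hxy
  refine hk fun t ht => ?_
  obtain ⟨l, hkl, hlk, htl⟩ := hn.exists_mem_block ht.1 ht.2
  exact hxa l (fun h => hxy ⟨l, hkl, hlk, fun m h1 h2 => h ⟨h1, h2⟩⟩) htl

/-- Theorem 18: characterization of the meager-additive sets. -/
theorem stmt14 (X : Set Cantor) : MeagerAdditive X ↔ MatchProp X :=
  ⟨MeagerAdditive.matchProp, MatchProp.meagerAdditive⟩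
end

section
/- If X ⊆ 2^ω is meager-additive then for every increasing sequence (n_i)_{i<ω} of naturals, there exist an increasing sequence (i_l)_{l<ω} and y ∈ 2^ω such that for every x ∈ X, for all sufficiently large k there is j ∈ [i_k, i_{k+1}) with x↾[n_j, n_{j+1}) = y↾[n_j, n_{j+1}). -/
open MeasureTheory Pointwise

lemma zmod2_eq_of_add_eq_zero : ∀ a b : ZMod 2, a + b = 0 → a = b := by decide

lemma zmod2_cancel : ∀ a b : ZMod 2, a + (a + b) = b := by decide

lemma cyl_isOpen (z : Cantor) (N : ℕ) : IsOpen {y : Cantor | ∀ m < N, y m = z m} := by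
  have : {y : Cantor | ∀ m < N, y m = z m}
      = ⋂ m ∈ Finset.range N, (fun y : Cantor => y m) ⁻¹' {z m} := by
    ext y; simp [Set.mem_iInter]
  rw [this]
  exact isOpen_biInter_finset fun m _ =>
    (continuous_apply m).isOpen_preimage _ (isOpen_discrete _)

lemma open_mem_cyl {U : Set Cantor} (hU : IsOpen U) {z : Cantor} (hz : z ∈ U) :
    ∃ N, {y : Cantor | ∀ m < N, y m = z m} ⊆ U := by
  obtain ⟨I, u, h1, h2⟩ := isOpen_pi_iff.mp hU z hz
  refine ⟨(I.sup id) + 1, fun y hy => h2 ?_⟩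
  intro i hi
  have : y i = z i := hy i (Nat.lt_succ_of_le (Finset.le_sup (f := id) hi))
  rw [this]; exact (h1 i hi).2

lemma avoid_list (U : Set Cantor) (hO : IsOpen U) (hD : Dense U) (L : ℕ) (P : List Cantor) :
    ∃ (M : ℕ) (w : Cantor), L ≤ M ∧ ∀ σ ∈ P, ∀ y : Cantor, (∀ m < L, y m = σ m) →
      (∀ m, L ≤ m → m < M → y m = w m) → y ∈ U := by
  induction P with
  | nil => exact ⟨L, fun _ => 0, le_rfl, by simp⟩
  | cons σ P ih =>
    obtain ⟨M, w, hLM, hP⟩ := ih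
    set p : Cantor := fun m => if m < L then σ m else w m with hp
    obtain ⟨z, hzU, hzc⟩ := hD.exists_mem_open (cyl_isOpen p M) ⟨p, fun _ _ => rfl⟩
    obtain ⟨N, hN⟩ := open_mem_cyl hO hzU
    refine ⟨max M N, z, le_trans hLM (le_max_left _ _), ?_⟩
    intro σ' hmem y hylow yhseg
    rcases List.mem_cons.mp hmem with rfl | hσ'
    · apply hN
      intro m hm
      by_cases hmL : m < L
      · rw [hylow m hmL, hzc m (lt_of_lt_of_le hmL hLM)]
        simp [hp, hmL]
      · exact yhseg m (Nat.le_of_not_lt hmL) (lt_of_lt_of_le hm (le_max_right _ _))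
    · refine hP σ' hσ' y hylow ?_
      intro m hm1 hm2
      rw [yhseg m hm1 (lt_of_lt_of_le hm2 (le_max_left _ _)), hzc m hm2]
      simp [hp, Nat.not_lt_of_le hm1]

lemma avoid (U : Set Cantor) (hO : IsOpen U) (hD : Dense U) (L : ℕ) :
    ∃ (M : ℕ) (w : Cantor), L ≤ M ∧ ∀ y : Cantor, (∀ m, L ≤ m → m < M → y m = w m) → y ∈ U := by
  obtain ⟨M, w, hLM, h⟩ := avoid_list U hO hD L
    (((Finset.univ : Finset (Fin L → ZMod 2)).toList).map
      (fun f m => if hm : m < L then f ⟨m, hm⟩ else 0))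
  refine ⟨M, w, hLM, fun y hy => ?_⟩
  refine h (fun m => if hm : m < L then y m else 0) ?_ y (fun m hm => ?_) hy
  · exact List.mem_map.2 ⟨fun i => y i.1, Finset.mem_toList.2 (Finset.mem_univ _), rfl⟩
  · simp [hm]

lemma A_meagre (n : ℕ → ℕ) (hn : StrictMono n) :
    IsMeagre {x : Cantor | ∀ j, ∃ m, n j ≤ m ∧ m < n (j+1) ∧ x m ≠ 0} := by
  set A : Set Cantor := {x : Cantor | ∀ j, ∃ m, n j ≤ m ∧ m < n (j+1) ∧ x m ≠ 0} with hAdef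
  have hclosed : IsClosed A := by
    rw [← isOpen_compl_iff]
    have hc : Aᶜ = ⋃ j, ⋂ m ∈ Finset.Ico (n j) (n (j+1)), (fun x : Cantor => x m) ⁻¹' {0} := by
      ext x
      simp only [hAdef, Set.mem_compl_iff, Set.mem_setOf_eq, not_forall, Set.mem_iUnion,
        Set.mem_iInter, Finset.mem_Ico, Set.mem_preimage, Set.mem_singleton_iff]
      push_neg
      constructor
      · rintro ⟨j, hj⟩; exact ⟨j, fun m hm => hj m hm.1 hm.2⟩
      · rintro ⟨j, hj⟩; exact ⟨j, fun m h1 h2 => hj m ⟨h1, h2⟩⟩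
    rw [hc]
    exact isOpen_iUnion fun j => isOpen_biInter_finset fun m _ =>
      (continuous_apply m).isOpen_preimage _ (isOpen_discrete _)
  have hnwd : IsNowhereDense A := by
    rw [hclosed.isNowhereDense_iff]
    rw [Set.eq_empty_iff_forall_notMem]
    intro x hx
    obtain ⟨N, hN⟩ := open_mem_cyl isOpen_interior hx
    have hsub : {y : Cantor | ∀ m < N, y m = x m} ⊆ A := hN.trans interior_subset
    classical
    set x' : Cantor := fun m => if n N ≤ m ∧ m < n (N+1) then 0 else x m with hx'
    have hx'mem : x' ∈ A := by
      apply hsub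
      intro m hm
      have : ¬(n N ≤ m ∧ m < n (N+1)) := by
        intro ⟨h1, _⟩
        exact absurd (lt_of_lt_of_le hm hn.le_apply) (not_lt_of_ge h1)
      simp [hx', this]
    obtain ⟨m, h1, h2, h3⟩ := hx'mem N
    apply h3
    simp [hx', h1, h2]
  rw [isMeagre_iff_countable_union_isNowhereDense]
  exact ⟨{A}, by simpa using hnwd, Set.countable_singleton _, by simp⟩

theorem stmt16' (X : Set Cantor) (h : ∀ A : Set Cantor, IsMeagre A → IsMeagre (X + A)) :
    ∀ n : ℕ → ℕ, StrictMono n →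
    ∃ i : ℕ → ℕ, StrictMono i ∧ ∃ y : Cantor,
      ∀ x ∈ X, ∀ᶠ k in Filter.atTop, ∃ l, i k ≤ l ∧ l < i (k + 1) ∧
        ∀ m, n l ≤ m → m < n (l + 1) → x m = y m := by
  classical
  intro n hn
  set A : Set Cantor := {x : Cantor | ∀ j, ∃ m, n j ≤ m ∧ m < n (j+1) ∧ x m ≠ 0} with hAdef
  have hXA : IsMeagre (X + A) := h A (A_meagre n hn)
  obtain ⟨S, hSnwd, hScnt, hScov⟩ := isMeagre_iff_countable_union_isNowhereDense.1 hXA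
  obtain ⟨e, he⟩ : ∃ e : ℕ → Set Cantor, insert ∅ S = Set.range e :=
    (hScnt.insert ∅).exists_eq_range (Set.insert_nonempty _ _)
  have henwd : ∀ j, IsNowhereDense (e j) := by
    intro j
    have hmem : e j ∈ insert ∅ S := he ▸ Set.mem_range_self j
    rcases Set.mem_insert_iff.1 hmem with h0 | hS
    · rw [h0]; exact isNowhereDense_empty
    · exact hSnwd _ hS
  have hcov : X + A ⊆ ⋃ j, e j := by
    refine hScov.trans ?_
    rw [show (⋃ j, e j) = ⋃₀ Set.range e from (Set.sUnion_range e).symm, ← he]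
    exact Set.sUnion_subset_sUnion (Set.subset_insert _ _)
  have hUk : ∀ k, IsOpen (⋂ j ∈ Finset.range (k+1), (closure (e j))ᶜ) ∧
      Dense (⋂ j ∈ Finset.range (k+1), (closure (e j))ᶜ) := by
    intro k
    induction k with
    | zero =>
      rw [Finset.range_one]
      simp only [Finset.mem_singleton, Set.iInter_iInter_eq_left]
      exact ⟨isClosed_closure.isOpen_compl, interior_eq_empty_iff_dense_compl.1 (henwd 0)⟩
    | succ k ih =>
      rw [Finset.range_add_one, Finset.set_biInter_insert]
      exact ⟨isClosed_closure.isOpen_compl.inter ih.1,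
        (interior_eq_empty_iff_dense_compl.1 (henwd (k+1))).inter_of_isOpen_left ih.2
          isClosed_closure.isOpen_compl⟩
  have hav : ∀ k L, ∃ (M : ℕ) (w : Cantor), L ≤ M ∧ ∀ y : Cantor,
      (∀ m, L ≤ m → m < M → y m = w m) → y ∈ ⋂ j ∈ Finset.range (k+1), (closure (e j))ᶜ :=
    fun k L => avoid _ (hUk k).1 (hUk k).2 L
  choose M W hLM hW using hav
  let i : ℕ → ℕ := fun k => Nat.rec 0 (fun k ik => max (ik + 1) (M k (n ik))) k
  have hisucc : ∀ k, i (k+1) = max (i k + 1) (M k (n (i k))) := fun k => rfl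
  have himono : StrictMono i := by
    apply strictMono_nat_of_lt_succ
    intro k
    rw [hisucc]
    exact lt_of_lt_of_le (Nat.lt_succ_self _) (le_max_left _ _)
  have hMle : ∀ k, M k (n (i k)) ≤ n (i (k+1)) := by
    intro k
    calc M k (n (i k)) ≤ i (k+1) := by rw [hisucc]; exact le_max_right _ _
    _ ≤ n (i (k+1)) := hn.le_apply
  have huniq : ∀ k k' m, n (i k) ≤ m → m < n (i (k+1)) → n (i k') ≤ m → m < n (i (k'+1)) →
      k = k' := by
    intro k k' m h1 h2 h3 h4
    by_contra hne
    rcases Nat.lt_or_ge k k' with hlt | hge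
    · have : n (i (k+1)) ≤ n (i k') := hn.monotone (himono.monotone hlt)
      omega
    · have hlt : k' < k := lt_of_le_of_ne hge (Ne.symm hne)
      have : n (i (k'+1)) ≤ n (i k) := hn.monotone (himono.monotone hlt)
      omega
  let y : Cantor := fun m =>
    if hex : ∃ k, n (i k) ≤ m ∧ m < n (i (k+1)) then W hex.choose (n (i hex.choose)) m else 0
  have hy : ∀ k m, n (i k) ≤ m → m < n (i (k+1)) → y m = W k (n (i k)) m := by
    intro k m h1 h2
    have hex : ∃ k, n (i k) ≤ m ∧ m < n (i (k+1)) := ⟨k, h1, h2⟩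
    have hck : hex.choose = k := huniq _ _ m hex.choose_spec.1 hex.choose_spec.2 h1 h2
    have hym : y m = W hex.choose (n (i hex.choose)) m := dif_pos hex
    rw [hym, hck]
  refine ⟨i, himono, y, ?_⟩
  intro x hx
  by_contra hcon
  rw [Filter.not_eventually] at hcon
  have hfreq : ∀ j, ∃ k, j ≤ k ∧ ∀ l, i k ≤ l → l < i (k+1) →
      ∃ m, n l ≤ m ∧ m < n (l+1) ∧ x m ≠ y m := by
    intro j
    obtain ⟨k, hk1, hk2⟩ := Filter.frequently_atTop.mp hcon j
    push_neg at hk2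
    exact ⟨k, hk1, hk2⟩
  set B : ℕ → Prop := fun k => ∀ l, i k ≤ l → l < i (k+1) →
      ∃ m, n l ≤ m ∧ m < n (l+1) ∧ x m ≠ y m with hBdef
  let w : Cantor := fun m =>
    if ∃ k, B k ∧ n (i k) ≤ m ∧ m < n (i (k+1)) then y m else x m + 1
  let a : Cantor := fun m => x m + w m
  have haA : a ∈ A := by
    rw [hAdef]
    intro j
    rcases Classical.em (∃ k, B k ∧ i k ≤ j ∧ j < i (k+1)) with hcase | hcase
    · obtain ⟨k, hBk, hj1, hj2⟩ := hcase
      obtain ⟨m, hm1, hm2, hne⟩ := hBk j hj1 hj2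
      refine ⟨m, hm1, hm2, ?_⟩
      have hsb1 : n (i k) ≤ m := le_trans (hn.monotone hj1) hm1
      have hsb2 : m < n (i (k+1)) := lt_of_lt_of_le hm2 (hn.monotone (Nat.succ_le_of_lt hj2))
      have hwm : w m = y m := if_pos ⟨k, hBk, hsb1, hsb2⟩
      show x m + w m ≠ 0
      rw [hwm]
      intro h0
      exact hne (zmod2_eq_of_add_eq_zero _ _ h0)
    · refine ⟨n j, le_rfl, hn (Nat.lt_succ_self j), ?_⟩
      have hwm : w (n j) = x (n j) + 1 := by
        apply if_neg
        rintro ⟨k, hBk, hk1, hk2⟩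
        exact hcase ⟨k, hBk, hn.le_iff_le.1 hk1, hn.lt_iff_lt.1 hk2⟩
      show x (n j) + w (n j) ≠ 0
      rw [hwm, zmod2_cancel]
      decide
  have hwXA : w ∈ X + A := by
    have hxa : x + a = w := by
      funext m
      show x m + (x m + w m) = w m
      exact zmod2_cancel _ _
    rw [← hxa]
    exact Set.add_mem_add hx haA
  obtain ⟨j, hj⟩ := Set.mem_iUnion.1 (hcov hwXA)
  obtain ⟨k, hjk, hBk⟩ := hfreq j
  have hwU : w ∈ ⋂ j' ∈ Finset.range (k+1), (closure (e j'))ᶜ := by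
    apply hW k (n (i k))
    intro m hm1 hm2
    have hm2' : m < n (i (k+1)) := lt_of_lt_of_le hm2 (hMle k)
    have hwm : w m = y m := if_pos ⟨k, hBk, hm1, hm2'⟩
    rw [hwm]
    exact hy k m hm1 hm2'
  simp only [Set.mem_iInter] at hwU
  exact hwU j (Finset.mem_range.2 (Nat.lt_succ_of_le hjk)) (subset_closure hj)

/-- Theorem 18, (a) → (b). -/
theorem stmt16 (X : Set Cantor) (h : MeagerAdditive X) : MatchProp X := by
  intro n hn
  exact stmt16' X h n hn
end
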